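/- arXiv:2208.11677 — 2 statements merged into one kernel-verified Lean document; each statement's English description precedes it below -/
import Mathlib

section
/- In the multi-stripe setting, let Π_{q,0} ∈ ℂ^{K×K} for q = 1,…,Q be the matrices produced by the backward recursion Π_{q,M} := 0, V_{q,m} := (I − Π_{q,m}P_{q,m})^{-1}(I − Π_{q,m}), V̄_{q,m} := I − P_{q,m}V_{q,m}, Π_{q,m} := E[P_{q,m+1}V_{q,m+1}] + Π_{q,m+1}E[V̄_{q,m+1}] down to m = 0, from mutually independent square-integrable random matrices Ĥ_{q,1},…,Ĥ_{q,M}, with P_{q,m} := W^{1/2}Ĥ_{q,m}(Ĥ_{q,m}ᴴWĤ_{q,m} + Ψ_{q,m} + P^{-1}I)^{-1}Ĥ_{q,m}ᴴW^{1/2}. Then for every nonempty subset 𝒬_k ⊆ {1,…,Q} and every standard basis vector e_k of ℂ^K, the linear system c_q + Σ_{j ∈ 𝒬_k∖{q}} Π_{j,0} c_j = e_k, required for all q ∈ 𝒬_k, has a unique solution (c_q)_{q ∈ 𝒬_k} in (ℂ^K)^{𝒬_k}. -/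
open MeasureTheory ProbabilityTheory Matrix Finset
open scoped ENNReal

noncomputable section

/-- Squared Euclidean norm of a complex vector, valued in `ℝ≥0∞`. -/
def enormSq {n : Type*} [Fintype n] (v : n → ℂ) : ℝ≥0∞ := ∑ i, (‖v i‖₊ : ℝ≥0∞) ^ 2

/-- Squared Frobenius norm of a complex matrix, valued in `ℝ≥0∞`. -/
def frobSq {a b : Type*} [Fintype a] [Fintype b] (A : Matrix a b ℂ) : ℝ≥0∞ :=
  ∑ i, ∑ j, (‖A i j‖₊ : ℝ≥0∞) ^ 2

/-- `diag(w)` as a complex matrix. -/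
def diagC {K : ℕ} (w : Fin K → ℝ) : Matrix (Fin K) (Fin K) ℂ :=
  Matrix.diagonal fun i => (w i : ℂ)

/-- `diag(w)^{1/2}` as a complex matrix. -/
def sqrtDiag {K : ℕ} (w : Fin K → ℝ) : Matrix (Fin K) (Fin K) ℂ :=
  Matrix.diagonal fun i => (Real.sqrt (w i) : ℂ)

/-- The team MSE functional `MSE_k`, written in block form:
`MSE_k(t) = E[ ‖W^{1/2} H t - e_k‖² + P⁻¹ ‖t‖² ]`, where `H t = ∑ l, H_l t_l` and
`‖t‖² = ∑ l, ‖t_l‖²`. -/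
def teamMSE {Ω : Type*} {m0 : MeasurableSpace Ω} {ι : Type*} [Fintype ι] {K N : ℕ}
    (μ : Measure Ω) (w : Fin K → ℝ) (P : ℝ) (Hb : ι → Ω → Matrix (Fin K) (Fin N) ℂ)
    (k : Fin K) (t : ι → Ω → Fin N → ℂ) : ℝ≥0∞ :=
  ∫⁻ ω, enormSq ((∑ l, (sqrtDiag w * Hb l ω) *ᵥ t l ω) - Pi.single k 1)
      + ENNReal.ofReal P⁻¹ * ∑ l, enormSq (t l ω) ∂μ

/-- Membership in the constraint set `𝒯^{(k)}`: each block `t_l` is square-integrable,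
`Σ_l`-measurable when `l` belongs to the serving set, and a.s. zero otherwise. -/
def memT {Ω : Type*} {m0 : MeasurableSpace Ω} {ι : Type*} {N : ℕ} (μ : Measure Ω)
    (msig : ι → MeasurableSpace Ω) (Lk : Finset ι) (t : ι → Ω → Fin N → ℂ) : Prop :=
  ∀ l, MemLp (t l) 2 μ ∧ (l ∈ Lk → Measurable[msig l] (t l)) ∧
    (l ∉ Lk → t l =ᵐ[μ] fun _ => 0)

/-- Entrywise conditional expectation of a random vector. -/
def cExpVec {Ω : Type*} {N : Type*} {m0 : MeasurableSpace Ω} (μ : Measure Ω)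
    (m : MeasurableSpace Ω) (v : Ω → N → ℂ) : Ω → N → ℂ :=
  fun ω i => (μ[fun ω' => v ω' i|m]) ω

/-- Entrywise conditional expectation of a random matrix. -/
def cExpMat {Ω a b : Type*} {m0 : MeasurableSpace Ω} (μ : Measure Ω)
    (m : MeasurableSpace Ω) (M : Ω → Matrix a b ℂ) : Ω → Matrix a b ℂ :=
  fun ω => Matrix.of fun i j => (μ[fun ω' => M ω' i j|m]) ω

/-- Entrywise expectation of a random matrix. -/
def intMat {Ω a b : Type*} {m0 : MeasurableSpace Ω} (μ : Measure Ω)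
    (M : Ω → Matrix a b ℂ) : Matrix a b ℂ := Matrix.of fun i j => ∫ ω, M ω i j ∂μ

/-- The σ-algebra generated by a random matrix. -/
def sigGen {Ω : Type*} {K N : ℕ} (F : Ω → Matrix (Fin K) (Fin N) ℂ) : MeasurableSpace Ω :=
  ⨆ i, ⨆ j, MeasurableSpace.comap (fun ω => F ω i j) inferInstance

/-- Downlink SINR of user `k` under distributed precoding (hardening bound):
`SINR_k = p_k |E[g_kᴴ t_k]|² / (p_k Var[g_kᴴ t_k] + ∑_{j ≠ k} p_j E[|g_kᴴ t_j|²] + 1)`,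
where `g_kᴴ t_j = (H t_j)_k = ∑ l, (H_l t_{j,l})_k`. -/
def dlSINR {Ω : Type*} {m0 : MeasurableSpace Ω} {K L N : ℕ}
    (μ : Measure Ω) (Hb : Fin L → Ω → Matrix (Fin K) (Fin N) ℂ)
    (p : Fin K → ℝ) (t : Fin K → Fin L → Ω → Fin N → ℂ) (k : Fin K) : ℝ :=
  p k * ‖∫ ω, ∑ l, (Hb l ω *ᵥ t k l ω) k ∂μ‖ ^ 2 /
    (p k * ((∫ ω, ‖∑ l, (Hb l ω *ᵥ t k l ω) k‖ ^ 2 ∂μ)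
          - ‖∫ ω, ∑ l, (Hb l ω *ᵥ t k l ω) k ∂μ‖ ^ 2)
      + (∑ j ∈ Finset.univ.erase k, p j * ∫ ω, ‖∑ l, (Hb l ω *ᵥ t j l ω) k‖ ^ 2 ∂μ) + 1)

open scoped ComplexOrder

/-- `T = (Ĥᴴ W Ĥ + Ψ + P⁻¹ I)⁻¹ Ĥᴴ W^{1/2}`. -/
def Tof {K N : ℕ} (w : Fin K → ℝ) (P : ℝ) (Ψ : Matrix (Fin N) (Fin N) ℂ)
    (Hh : Matrix (Fin K) (Fin N) ℂ) : Matrix (Fin N) (Fin K) ℂ :=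
  (Hhᴴ * diagC w * Hh + Ψ + (P⁻¹ : ℂ) • 1)⁻¹ * (Hhᴴ * sqrtDiag w)

/-- `P = W^{1/2} Ĥ T`. -/
def Pof {K N : ℕ} (w : Fin K → ℝ) (P : ℝ) (Ψ : Matrix (Fin N) (Fin N) ℂ)
    (Hh : Matrix (Fin K) (Fin N) ℂ) : Matrix (Fin K) (Fin K) ℂ :=
  sqrtDiag w * Hh * Tof w P Ψ Hh

/-- `V = (I − Π P)⁻¹ (I − Π)`. -/
def Vof {K : ℕ} (Pi Pm : Matrix (Fin K) (Fin K) ℂ) : Matrix (Fin K) (Fin K) ℂ :=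
  (1 - Pi * Pm)⁻¹ * (1 - Pi)

/-- `V̄ = I − P V`. -/
def Vbarof {K : ℕ} (Pi Pm : Matrix (Fin K) (Fin K) ℂ) : Matrix (Fin K) (Fin K) ℂ :=
  1 - Pm * Vof Pi Pm

/-- Backward recursion for the deterministic matrices `Π_m` (unidirectional CSIT sharing):
`Π_M := 0` and `Π_m := E[P_{m+1} V_{m+1}] + Π_{m+1} E[V̄_{m+1}]` for `m < M`, where
`V_{m+1}, V̄_{m+1}` are built from `Π_{m+1}` and `P_{m+1}`. -/
def PiRec {Ω : Type*} {m0 : MeasurableSpace Ω} {K : ℕ} (μ : Measure Ω)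
    (Pf : ℕ → Ω → Matrix (Fin K) (Fin K) ℂ) (M : ℕ) (m : ℕ) : Matrix (Fin K) (Fin K) ℂ :=
  if h : M ≤ m then 0
  else
    intMat μ (fun ω => Pf (m+1) ω * Vof (PiRec μ Pf M (m+1)) (Pf (m+1) ω))
      + PiRec μ Pf M (m+1) * intMat μ (fun ω => Vbarof (PiRec μ Pf M (m+1)) (Pf (m+1) ω))
termination_by M - m
decreasing_by all_goals omega

/-- Backward recursion for the random matrices `P̄_m` (bidirectional CSIT sharing):
`P̄_M := 0` and `P̄_m := P_{m+1} V_{m+1} + P̄_{m+1} V̄_{m+1}` pathwise. -/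
def PbarRec {Ω : Type*} {K : ℕ} (Pf : ℕ → Ω → Matrix (Fin K) (Fin K) ℂ) (M : ℕ) (m : ℕ)
    (ω : Ω) : Matrix (Fin K) (Fin K) ℂ :=
  if h : M ≤ m then 0
  else
    Pf (m+1) ω * Vof (PbarRec Pf M (m+1) ω) (Pf (m+1) ω)
      + PbarRec Pf M (m+1) ω * Vbarof (PbarRec Pf M (m+1) ω) (Pf (m+1) ω)
termination_by M - m
decreasing_by all_goals omega

/-- Left product `V̄_m ⋯ V̄_1` (empty product for `m = 0`). -/
def lprodV {Ω : Type*} {K : ℕ} (Vb : ℕ → Ω → Matrix (Fin K) (Fin K) ℂ) :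
    ℕ → Ω → Matrix (Fin K) (Fin K) ℂ
  | 0 => fun _ => 1
  | n+1 => fun ω => Vb (n+1) ω * lprodV Vb n ω

/-- The random matrix process `P_m = W^{1/2} Ĥ_m T_m`. -/
def PmFun {Ω : Type*} {K N : ℕ} (w : Fin K → ℝ) (P : ℝ)
    (Ψ : ℕ → Matrix (Fin N) (Fin N) ℂ) (Hhat : ℕ → Ω → Matrix (Fin K) (Fin N) ℂ)
    (m : ℕ) (ω : Ω) : Matrix (Fin K) (Fin K) ℂ :=
  Pof w P (Ψ m) (Hhat m ω)

/-- `V_m` built from `Π_m` (unidirectional CSIT sharing). -/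
def VmFun {Ω : Type*} {m0 : MeasurableSpace Ω} {K N : ℕ} (μ : Measure Ω) (w : Fin K → ℝ)
    (P : ℝ) (Ψ : ℕ → Matrix (Fin N) (Fin N) ℂ) (Hhat : ℕ → Ω → Matrix (Fin K) (Fin N) ℂ)
    (M m : ℕ) (ω : Ω) : Matrix (Fin K) (Fin K) ℂ :=
  Vof (PiRec μ (PmFun w P Ψ Hhat) M m) (PmFun w P Ψ Hhat m ω)

/-- `V̄_m` built from `Π_m` (unidirectional CSIT sharing). -/
def VbFun {Ω : Type*} {m0 : MeasurableSpace Ω} {K N : ℕ} (μ : Measure Ω) (w : Fin K → ℝ)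
    (P : ℝ) (Ψ : ℕ → Matrix (Fin N) (Fin N) ℂ) (Hhat : ℕ → Ω → Matrix (Fin K) (Fin N) ℂ)
    (M m : ℕ) (ω : Ω) : Matrix (Fin K) (Fin K) ℂ :=
  Vbarof (PiRec μ (PmFun w P Ψ Hhat) M m) (PmFun w P Ψ Hhat m ω)

/-- `V_m` built from `P̄_m` (bidirectional CSIT sharing). -/
def VmFunB {Ω : Type*} {K N : ℕ} (w : Fin K → ℝ)
    (P : ℝ) (Ψ : ℕ → Matrix (Fin N) (Fin N) ℂ) (Hhat : ℕ → Ω → Matrix (Fin K) (Fin N) ℂ)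
    (M m : ℕ) (ω : Ω) : Matrix (Fin K) (Fin K) ℂ :=
  Vof (PbarRec (PmFun w P Ψ Hhat) M m ω) (PmFun w P Ψ Hhat m ω)

/-- `V̄_m` built from `P̄_m` (bidirectional CSIT sharing). -/
def VbFunB {Ω : Type*} {K N : ℕ} (w : Fin K → ℝ)
    (P : ℝ) (Ψ : ℕ → Matrix (Fin N) (Fin N) ℂ) (Hhat : ℕ → Ω → Matrix (Fin K) (Fin N) ℂ)
    (M m : ℕ) (ω : Ω) : Matrix (Fin K) (Fin K) ℂ :=
  Vbarof (PbarRec (PmFun w P Ψ Hhat) M m ω) (PmFun w P Ψ Hhat m ω)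

/-- σ-algebra generated by the estimates `Ĥ_1, …, Ĥ_m` of (an initial segment of) a stripe. -/
def stripeSig {Ω : Type*} {K N : ℕ} (Hhat : ℕ → Ω → Matrix (Fin K) (Fin N) ℂ) (m : ℕ) :
    MeasurableSpace Ω :=
  ⨆ n ∈ Finset.Icc 1 m, sigGen (Hhat n)

/-!
All matrices of the recursion lie in the Loewner interval `0 ≤ Π < 1`. Each `P_{q,m}` has the
form `B (BᴴB + Y)⁻¹ Bᴴ` with `Y > 0`, and Woodbury gives `1 - P = (1 + B Y⁻¹ Bᴴ)⁻¹ > 0`. The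
backward step preserves the interval: with `C = 1 - Π_{m+1}`, `D = 1 - P_{m+1}` and
`X = (C⁻¹ + D⁻¹ - 1)⁻¹` one has `1 - Π_{m+1} P_{m+1} = C X⁻¹ D`, hence `P V = 1 - C⁻¹ X`,
`V̄ = C⁻¹ X` and `Π_m = 1 - E[X]`. Since `C⁻¹, D⁻¹ ≥ 1`, pointwise `0 < X ≤ 1`; so `X` is bounded,
`E[X] > 0` and `E[1 - X] ≥ 0`.

If `0 ≤ Π_j < 1` for all `j`, the system is injective: a solution of the homogeneous system has
`c_q = -(1 - Π_q)⁻¹ σ` with `σ = ∑_j Π_j c_j`, so `(1 + ∑_j ((1 - Π_j)⁻¹ - 1)) σ = 0`, which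
forces `σ = 0` and then `c = 0`. In finite dimension injectivity gives unique solvability.
-/

namespace Matrix

variable {n : Type*}

section LoewnerOrder

open scoped MatrixOrder Matrix.Norms.L2Operator

lemma one_le_inv_of_le_one [Fintype n] [DecidableEq n] {C : Matrix n n ℂ} (hC : C.PosDef)
    (h : C ≤ 1) : 1 ≤ C⁻¹ := by
  lift C to (Matrix n n ℂ)ˣ using hC.isUnit
  simpa [coe_units_inv] using
    (CStarAlgebra.one_le_inv_iff_le_one (a := C) hC.posSemidef.nonneg).mpr h

lemma inv_le_one_of_one_le [Fintype n] [DecidableEq n] {Z : Matrix n n ℂ} (h : 1 ≤ Z) :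
    Z⁻¹ ≤ 1 := by
  lift Z to (Matrix n n ℂ)ˣ using CStarAlgebra.isUnit_of_le 1 h
  simpa [coe_units_inv] using (CStarAlgebra.inv_le_one_iff_one_le (zero_le_one.trans h)).mpr h

lemma posDef_of_one_le [DecidableEq n] {Z : Matrix n n ℂ} (h : 1 ≤ Z) : Z.PosDef := by
  simpa using PosDef.one.add_posSemidef h

end LoewnerOrder

lemma PosSemidef.norm_apply_sq_le {A : Matrix n n ℂ} (hA : A.PosSemidef) (i j : n) :
    ((‖A i j‖ ^ 2 : ℝ) : ℂ) ≤ A i i * A j j := by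
  have h := (hA.submatrix ![i, j]).det_nonneg
  simp only [det_fin_two, submatrix_apply, cons_val_zero, cons_val_one] at h
  rw [← hA.isHermitian.apply j i] at h
  rwa [Complex.star_def, Complex.mul_conj, Complex.normSq_eq_norm_sq, sub_nonneg] at h

lemma PosSemidef.norm_apply_le_one [DecidableEq n] {A : Matrix n n ℂ} (h0 : A.PosSemidef)
    (h1 : (1 - A).PosSemidef) (i j : n) : ‖A i j‖ ≤ 1 := by
  have hle : ∀ l, A l l ≤ 1 := fun l => by
    simpa [sub_nonneg] using h1.diag_nonneg (i := l)
  have h := (h0.norm_apply_sq_le i j).trans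
    (mul_le_one₀ (hle i) (h0.diag_nonneg (i := j)) (hle j))
  exact (sq_le_one_iff₀ (norm_nonneg _)).mp (by exact_mod_cast h)

lemma PosDef.isUnit_det [Fintype n] [DecidableEq n] {A : Matrix n n ℂ} (hA : A.PosDef) :
    IsUnit A.det :=
  hA.det_pos.ne'.isUnit

def PosSemidefLtOne [DecidableEq n] (A : Matrix n n ℂ) : Prop :=
  A.PosSemidef ∧ (1 - A).PosDef

lemma posSemidefLtOne_zero [DecidableEq n] : PosSemidefLtOne (0 : Matrix n n ℂ) :=
  ⟨.zero, by simpa using PosDef.one⟩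

open scoped MatrixOrder in
lemma PosSemidefLtOne.one_le_inv_one_sub [Fintype n] [DecidableEq n] {A : Matrix n n ℂ}
    (hA : PosSemidefLtOne A) : 1 ≤ (1 - A)⁻¹ :=
  one_le_inv_of_le_one hA.2 (by simpa [le_iff] using hA.1)

lemma one_sub_mul_eq_mul_mul [Fintype n] [DecidableEq n] {A B : Matrix n n ℂ}
    (hA : IsUnit (1 - A).det) (hB : IsUnit (1 - B).det) :
    1 - A * B = (1 - A) * ((1 - A)⁻¹ + (1 - B)⁻¹ - 1) * (1 - B) := by
  have e : (1 - A) * ((1 - A)⁻¹ + (1 - B)⁻¹ - 1) * (1 - B)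
      = ((1 - A) * (1 - A)⁻¹) * (1 - B) + (1 - A) * ((1 - B)⁻¹ * (1 - B))
        - (1 - A) * (1 - B) := by noncomm_ring
  rw [e, mul_nonsing_inv _ hA, nonsing_inv_mul _ hB]
  noncomm_ring

lemma posSemidefLtOne_mul_inv_mul_conjTranspose {m k : Type*} [Fintype m] [DecidableEq m]
    [Fintype k] [DecidableEq k] (B : Matrix m k ℂ) {Y : Matrix k k ℂ} (hY : Y.PosDef) :
    PosSemidefLtOne (B * (Bᴴ * B + Y)⁻¹ * Bᴴ) := by
  have hR : (Bᴴ * B + Y).PosDef := PosDef.posSemidef_add (posSemidef_conjTranspose_mul_self B) hY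
  refine ⟨hR.inv.posSemidef.mul_mul_conjTranspose_same B, ?_⟩
  have hYY : Y⁻¹⁻¹ = Y := nonsing_inv_nonsing_inv _ hY.isUnit_det
  have hW := add_mul_mul_inv_eq_sub 1 B Y⁻¹ Bᴴ isUnit_one hY.inv.isUnit
    (by simpa [hYY, add_comm] using hR.isUnit)
  simp only [inv_one, Matrix.mul_one, Matrix.one_mul, hYY, add_comm Y] at hW
  rw [← hW]
  exact (PosDef.one.add_posSemidef (hY.inv.posSemidef.mul_mul_conjTranspose_same B)).inv

end Matrix

section EntrywiseMeasurable

variable {Ω : Type*} [MeasurableSpace Ω] {l m n : Type*}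

def EntrywiseMeasurable (f : Ω → Matrix m n ℂ) : Prop :=
  ∀ i j, Measurable fun ω => f ω i j

namespace EntrywiseMeasurable

lemma const (A : Matrix m n ℂ) : EntrywiseMeasurable fun _ : Ω => A :=
  fun _ _ => measurable_const

lemma add {f g : Ω → Matrix m n ℂ} (hf : EntrywiseMeasurable f) (hg : EntrywiseMeasurable g) :
    EntrywiseMeasurable fun ω => f ω + g ω :=
  fun i j => (hf i j).add (hg i j)

lemma sub {f g : Ω → Matrix m n ℂ} (hf : EntrywiseMeasurable f) (hg : EntrywiseMeasurable g) :
    EntrywiseMeasurable fun ω => f ω - g ω :=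
  fun i j => (hf i j).sub (hg i j)

lemma mul [Fintype m] {f : Ω → Matrix l m ℂ} {g : Ω → Matrix m n ℂ}
    (hf : EntrywiseMeasurable f) (hg : EntrywiseMeasurable g) :
    EntrywiseMeasurable fun ω => f ω * g ω :=
  fun i j => by
    simp only [Matrix.mul_apply]
    exact Finset.measurable_sum _ fun k _ => (hf i k).mul (hg k j)

lemma conjTranspose {f : Ω → Matrix m n ℂ} (hf : EntrywiseMeasurable f) :
    EntrywiseMeasurable fun ω => (f ω)ᴴ :=
  fun i j => continuous_star.measurable.comp (hf j i)

lemma det [Fintype n] [DecidableEq n] {f : Ω → Matrix n n ℂ} (hf : EntrywiseMeasurable f) :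
    Measurable fun ω => (f ω).det := by
  simp only [Matrix.det_apply']
  exact Finset.measurable_sum _ fun σ _ =>
    measurable_const.mul (Finset.measurable_prod _ fun i _ => hf (σ i) i)

lemma inv [Fintype n] [DecidableEq n] {f : Ω → Matrix n n ℂ} (hf : EntrywiseMeasurable f) :
    EntrywiseMeasurable fun ω => (f ω)⁻¹ := by
  intro i j
  simp only [Matrix.inv_def, Matrix.smul_apply, Ring.inverse_eq_inv, smul_eq_mul,
    Matrix.adjugate_apply]
  refine hf.det.inv.mul (EntrywiseMeasurable.det fun a b => ?_)
  by_cases ha : a = j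
  · simp only [Matrix.updateRow_apply, ha, if_true]
    exact measurable_const
  · simpa only [Matrix.updateRow_apply, ha, if_false] using hf a b

end EntrywiseMeasurable

lemma entrywiseMeasurable_pof {K N : ℕ} (w : Fin K → ℝ) (P : ℝ) (Ψ : Matrix (Fin N) (Fin N) ℂ)
    {H : Ω → Matrix (Fin K) (Fin N) ℂ} (hH : EntrywiseMeasurable H) :
    EntrywiseMeasurable fun ω => Pof w P Ψ (H ω) := by
  open EntrywiseMeasurable in
  exact ((const _).mul hH).mul
    (((((hH.conjTranspose.mul (const _)).mul hH).add (const _)).add (const _)).inv.mul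
      (hH.conjTranspose.mul (const _)))

end EntrywiseMeasurable

lemma Complex.integral_pos_of_forall_pos {Ω : Type*} [MeasurableSpace Ω] {μ : Measure Ω}
    [NeZero μ] {f : Ω → ℂ} (hf : Integrable f μ) (hpos : ∀ ω, 0 < f ω) : 0 < ∫ ω, f ω ∂μ := by
  have hre : ∀ ω, (f ω : ℂ) = ((f ω).re : ℂ) := fun ω =>
    Complex.ext rfl (by simp [(Complex.pos_iff.mp (hpos ω)).2.symm])
  rw [integral_congr_ae (ae_of_all _ hre), integral_complex_ofReal]
  refine Complex.zero_lt_real.mpr ((integral_pos_iff_support_of_nonneg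
    (fun ω => (Complex.pos_iff.mp (hpos ω)).1.le) hf.re).mpr ?_)
  rw [Function.support_eq_univ fun ω => (Complex.pos_iff.mp (hpos ω)).1.ne']
  simp [NeZero.ne μ]

section Expectation

variable {Ω : Type*} [MeasurableSpace Ω] {μ : Measure Ω} {n : Type*} {f : Ω → Matrix n n ℂ}

lemma integrable_apply_of_norm_le [IsFiniteMeasure μ] (hf : EntrywiseMeasurable f) {b : ℝ}
    (hb : ∀ ω i j, ‖f ω i j‖ ≤ b) (i j : n) : Integrable (fun ω => f ω i j) μ :=
  (integrable_const b).mono' (hf i j).aestronglyMeasurable (ae_of_all _ (hb · i j))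

lemma integrable_const_mul_apply [Fintype n] (hf : ∀ i j, Integrable (fun ω => f ω i j) μ)
    (C : Matrix n n ℂ) (i j : n) : Integrable (fun ω => (C * f ω) i j) μ := by
  simp only [Matrix.mul_apply]
  exact integrable_finsetSum _ fun k _ => (hf k j).const_mul _

lemma intMat_const_mul [Fintype n] (hf : ∀ i j, Integrable (fun ω => f ω i j) μ)
    (C : Matrix n n ℂ) : intMat μ (fun ω => C * f ω) = C * intMat μ f := by
  ext i j
  simp only [intMat, Matrix.of_apply, Matrix.mul_apply]
  rw [integral_finsetSum _ fun k _ => (hf k j).const_mul _]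
  exact Finset.sum_congr rfl fun k _ => integral_const_mul _ _

lemma intMat_const_sub [IsProbabilityMeasure μ] (hf : ∀ i j, Integrable (fun ω => f ω i j) μ)
    (C : Matrix n n ℂ) :
    intMat μ (fun ω => C - f ω) = C - intMat μ f := by
  ext i j
  simp only [intMat, Matrix.of_apply, Matrix.sub_apply]
  rw [integral_sub (integrable_const _) (hf i j), integral_const]
  simp

lemma dotProduct_intMat_mulVec [Fintype n] (hf : ∀ i j, Integrable (fun ω => f ω i j) μ)
    (x : n → ℂ) :
    star x ⬝ᵥ intMat μ f *ᵥ x = ∫ ω, star x ⬝ᵥ f ω *ᵥ x ∂μ := by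
  simp only [dotProduct, mulVec, intMat, Matrix.of_apply, Finset.mul_sum]
  rw [integral_finsetSum _ fun i _ => integrable_finsetSum _ fun j _ =>
    ((hf i j).mul_const _).const_mul _]
  refine Finset.sum_congr rfl fun i _ => ?_
  rw [integral_finsetSum _ fun j _ => ((hf i j).mul_const _).const_mul _]
  refine Finset.sum_congr rfl fun j _ => ?_
  rw [integral_const_mul, integral_mul_const]

lemma integrable_dotProduct_mulVec [Fintype n] (hf : ∀ i j, Integrable (fun ω => f ω i j) μ)
    (x : n → ℂ) :
    Integrable (fun ω => star x ⬝ᵥ f ω *ᵥ x) μ := by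
  simp only [dotProduct, mulVec, Finset.mul_sum]
  exact integrable_finsetSum _ fun i _ => integrable_finsetSum _ fun j _ =>
    ((hf i j).mul_const _).const_mul _

lemma isHermitian_intMat (hH : ∀ ω, (f ω).IsHermitian) : (intMat μ f).IsHermitian := by
  ext i j
  simp only [conjTranspose_apply, intMat, Matrix.of_apply]
  rw [Complex.star_def, ← integral_conj]
  exact integral_congr_ae (ae_of_all _ fun ω => (hH ω).apply i j)

lemma posSemidef_intMat [Fintype n] (hf : ∀ i j, Integrable (fun ω => f ω i j) μ)
    (h : ∀ ω, (f ω).PosSemidef) : (intMat μ f).PosSemidef :=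
  .of_dotProduct_mulVec_nonneg (isHermitian_intMat fun ω => (h ω).isHermitian) fun x => by
    rw [dotProduct_intMat_mulVec hf]
    exact integral_nonneg fun ω => (h ω).dotProduct_mulVec_nonneg x

lemma posDef_intMat [Fintype n] [IsProbabilityMeasure μ]
    (hf : ∀ i j, Integrable (fun ω => f ω i j) μ) (h : ∀ ω, (f ω).PosDef) : (intMat μ f).PosDef :=
  .of_dotProduct_mulVec_pos (isHermitian_intMat fun ω => (h ω).isHermitian) fun x hx => by
    rw [dotProduct_intMat_mulVec hf]
    exact Complex.integral_pos_of_forall_pos (integrable_dotProduct_mulVec hf x)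
      fun ω => (h ω).dotProduct_mulVec_pos hx

end Expectation

section BackwardStep

open Matrix

variable {K : ℕ} {A B : Matrix (Fin K) (Fin K) ℂ}

lemma mul_vof_eq (hA : IsUnit (1 - A).det) (hB : IsUnit (1 - B).det)
    (hZ : IsUnit ((1 - A)⁻¹ + (1 - B)⁻¹ - 1).det) :
    B * Vof A B = 1 - (1 - A)⁻¹ * ((1 - A)⁻¹ + (1 - B)⁻¹ - 1)⁻¹ := by
  have hZZ := mul_nonsing_inv _ hZ
  rw [sub_mul, add_mul, one_mul] at hZZ
  set Z := (1 - A)⁻¹ + (1 - B)⁻¹ - 1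
  have hV : Vof A B = (1 - B)⁻¹ * Z⁻¹ := by
    rw [Vof, one_sub_mul_eq_mul_mul hA hB, Matrix.mul_inv_rev, Matrix.mul_inv_rev,
      Matrix.mul_assoc, nonsing_inv_mul_cancel_right _ _ hA]
  calc B * Vof A B = (1 - B)⁻¹ * Z⁻¹ - (1 - B) * (1 - B)⁻¹ * Z⁻¹ := by
        rw [hV]; noncomm_ring
    _ = ((1 - A)⁻¹ * Z⁻¹ + (1 - B)⁻¹ * Z⁻¹ - Z⁻¹) - (1 - A)⁻¹ * Z⁻¹ := by
      rw [mul_nonsing_inv _ hB, one_mul]; abel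
    _ = 1 - (1 - A)⁻¹ * Z⁻¹ := by rw [hZZ]

lemma vbarof_eq (hA : IsUnit (1 - A).det) (hB : IsUnit (1 - B).det)
    (hZ : IsUnit ((1 - A)⁻¹ + (1 - B)⁻¹ - 1).det) :
    Vbarof A B = (1 - A)⁻¹ * ((1 - A)⁻¹ + (1 - B)⁻¹ - 1)⁻¹ := by
  rw [Vbarof, mul_vof_eq hA hB hZ, sub_sub_cancel]

end BackwardStep

section Recursion

open Matrix

variable {Ω : Type*} [MeasurableSpace Ω] {μ : Measure Ω} [IsProbabilityMeasure μ] {K : ℕ}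

open scoped MatrixOrder in
lemma Matrix.PosSemidefLtOne.backwardStep {A : Matrix (Fin K) (Fin K) ℂ}
    (hA : PosSemidefLtOne A) {B : Ω → Matrix (Fin K) (Fin K) ℂ}
    (hB : ∀ ω, PosSemidefLtOne (B ω)) (hBm : EntrywiseMeasurable B) :
    PosSemidefLtOne
      (intMat μ (fun ω => B ω * Vof A (B ω)) + A * intMat μ (fun ω => Vbarof A (B ω))) := by
  have hZ : ∀ ω, 1 ≤ (1 - A)⁻¹ + (1 - B ω)⁻¹ - 1 := fun ω =>
    le_sub_iff_add_le.mpr (add_le_add hA.one_le_inv_one_sub (hB ω).one_le_inv_one_sub)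
  set X := fun ω => ((1 - A)⁻¹ + (1 - B ω)⁻¹ - 1)⁻¹
  have hXpd : ∀ ω, (X ω).PosDef := fun ω => (posDef_of_one_le (hZ ω)).inv
  have hXle : ∀ ω, X ω ≤ 1 := fun ω => inv_le_one_of_one_le (hZ ω)
  have hXm : EntrywiseMeasurable X := open EntrywiseMeasurable in
    (((const _).add ((const _).sub hBm).inv).sub (const _)).inv
  have hXi := integrable_apply_of_norm_le (μ := μ) hXm fun ω =>
    (hXpd ω).posSemidef.norm_apply_le_one (hXle ω)
  have hunit : ∀ ω, IsUnit ((1 - A)⁻¹ + (1 - B ω)⁻¹ - 1).det := fun ω =>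
    (posDef_of_one_le (hZ ω)).isUnit_det
  have hstep : intMat μ (fun ω => B ω * Vof A (B ω)) + A * intMat μ (fun ω => Vbarof A (B ω))
      = 1 - intMat μ X := by
    simp only [mul_vof_eq hA.2.isUnit_det (hB _).2.isUnit_det (hunit _),
      vbarof_eq hA.2.isUnit_det (hB _).2.isUnit_det (hunit _)]
    rw [intMat_const_sub (integrable_const_mul_apply hXi _), intMat_const_mul hXi]
    calc 1 - (1 - A)⁻¹ * intMat μ X + A * ((1 - A)⁻¹ * intMat μ X)
        = 1 - ((1 - A) * (1 - A)⁻¹) * intMat μ X := by noncomm_ring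
      _ = 1 - intMat μ X := by rw [mul_nonsing_inv _ hA.2.isUnit_det, Matrix.one_mul]
  rw [hstep, ← intMat_const_sub hXi]
  refine ⟨posSemidef_intMat (fun i j => (integrable_const _).sub (hXi i j)) hXle, ?_⟩
  rw [intMat_const_sub hXi, sub_sub_cancel]
  exact posDef_intMat hXi hXpd

lemma posSemidefLtOne_piRec {Pf : ℕ → Ω → Matrix (Fin K) (Fin K) ℂ}
    (hPf : ∀ m ω, PosSemidefLtOne (Pf m ω)) (hPm : ∀ m, EntrywiseMeasurable (Pf m)) (M m : ℕ) :
    PosSemidefLtOne (PiRec μ Pf M m) := by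
  rw [PiRec]
  split_ifs
  · exact posSemidefLtOne_zero
  · exact (posSemidefLtOne_piRec hPf hPm M (m + 1)).backwardStep (hPf (m + 1)) (hPm (m + 1))
termination_by M - m

end Recursion

lemma sqrtDiag_conjTranspose {K : ℕ} (w : Fin K → ℝ) : (sqrtDiag w)ᴴ = sqrtDiag w := by
  simp [sqrtDiag, Matrix.diagonal_conjTranspose]

lemma sqrtDiag_mul_self {K : ℕ} {w : Fin K → ℝ} (hw : ∀ i, 0 ≤ w i) :
    sqrtDiag w * sqrtDiag w = diagC w := by
  simp only [sqrtDiag, diagC, Matrix.diagonal_mul_diagonal, ← Complex.ofReal_mul,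
    Real.mul_self_sqrt (hw _)]

lemma pof_eq {K N : ℕ} {w : Fin K → ℝ} (hw : ∀ i, 0 ≤ w i) (P : ℝ)
    (Ψ : Matrix (Fin N) (Fin N) ℂ) (H : Matrix (Fin K) (Fin N) ℂ) :
    Pof w P Ψ H = sqrtDiag w * H *
      ((sqrtDiag w * H)ᴴ * (sqrtDiag w * H) + (Ψ + (P⁻¹ : ℂ) • 1))⁻¹ * (sqrtDiag w * H)ᴴ := by
  simp only [Pof, Tof, Matrix.conjTranspose_mul, sqrtDiag_conjTranspose, ← add_assoc,
    ← sqrtDiag_mul_self hw, Matrix.mul_assoc]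

lemma posSemidefLtOne_pof {K N : ℕ} {w : Fin K → ℝ} (hw : ∀ i, 0 ≤ w i) {P : ℝ} (hP : 0 < P)
    {Ψ : Matrix (Fin N) (Fin N) ℂ} (hΨ : Ψ.PosSemidef) (H : Matrix (Fin K) (Fin N) ℂ) :
    (Pof w P Ψ H).PosSemidefLtOne := by
  rw [pof_eq hw]
  refine Matrix.posSemidefLtOne_mul_inv_mul_conjTranspose _ (Matrix.PosDef.posSemidef_add hΨ ?_)
  rw [Matrix.smul_one_eq_diagonal]
  exact Matrix.PosDef.diagonal fun _ => by exact_mod_cast inv_pos.mpr hP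

section BlockSystem

open Matrix

variable {ι n : Type*} [DecidableEq ι] [Fintype n]

-- The identity off `s`, so that `c_q = 0` for `q ∉ s` is the `q`-th equation.
def blockSystemMap (s : Finset ι) (A : ι → Matrix n n ℂ) : (ι → n → ℂ) →ₗ[ℂ] ι → n → ℂ :=
  LinearMap.pi fun q => if q ∈ s then
      LinearMap.proj q + ∑ j ∈ s.erase q, (A j).mulVecLin ∘ₗ LinearMap.proj j
    else LinearMap.proj q

lemma blockSystemMap_apply_of_mem {s : Finset ι} (A : ι → Matrix n n ℂ) (c : ι → n → ℂ)
    {q : ι} (hq : q ∈ s) : blockSystemMap s A c q = c q + ∑ j ∈ s.erase q, A j *ᵥ c j := by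
  simp [blockSystemMap, hq]

lemma blockSystemMap_apply_of_notMem {s : Finset ι} (A : ι → Matrix n n ℂ) (c : ι → n → ℂ)
    {q : ι} (hq : q ∉ s) : blockSystemMap s A c q = c q := by
  simp [blockSystemMap, hq]

lemma injective_blockSystemMap [DecidableEq n] (s : Finset ι) {A : ι → Matrix n n ℂ}
    (hA : ∀ j, PosSemidefLtOne (A j)) : Function.Injective (blockSystemMap s A) := by
  rw [← LinearMap.ker_eq_bot, LinearMap.ker_eq_bot']
  intro c hc
  set σ := ∑ j ∈ s, A j *ᵥ c j
  have hc_mem : ∀ q ∈ s, c q = -((1 - A q)⁻¹ *ᵥ σ) := by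
    intro q hq
    have h := congrFun hc q
    rw [blockSystemMap_apply_of_mem A c hq, Finset.sum_erase_eq_sub hq, Pi.zero_apply] at h
    have h' : (1 - A q) *ᵥ c q = -σ := by
      rw [sub_mulVec, one_mulVec, eq_neg_iff_add_eq_zero, ← h]
      abel
    rw [← mulVec_neg, ← h', mulVec_mulVec, nonsing_inv_mul _ (hA q).2.isUnit_det, one_mulVec]
  set T := ∑ j ∈ s, ((1 - A j)⁻¹ - 1)
  have hT : T.PosSemidef := posSemidef_sum s fun j _ => (hA j).one_le_inv_one_sub
  have hσ : (1 + T) *ᵥ σ = (1 + T) *ᵥ 0 := by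
    have hAT : ∀ j, A j * (1 - A j)⁻¹ = (1 - A j)⁻¹ - 1 := fun j =>
      calc A j * (1 - A j)⁻¹ = (1 - (1 - A j)) * (1 - A j)⁻¹ := by rw [sub_sub_cancel]
        _ = (1 - A j)⁻¹ - 1 := by
          rw [Matrix.sub_mul, Matrix.one_mul, mul_nonsing_inv _ (hA j).2.isUnit_det]
    have hσT : σ = -(T *ᵥ σ) :=
      calc σ = ∑ j ∈ s, -(((1 - A j)⁻¹ - 1) *ᵥ σ) := Finset.sum_congr rfl fun j hj => by
              rw [hc_mem j hj, mulVec_neg, mulVec_mulVec, hAT]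
        _ = -(T *ᵥ σ) := by rw [Finset.sum_neg_distrib, sum_mulVec]
    rw [add_mulVec, one_mulVec, mulVec_zero]
    exact eq_neg_iff_add_eq_zero.mp hσT
  have hσ0 : σ = 0 :=
    mulVec_injective_iff_isUnit.mpr (PosDef.one.add_posSemidef hT).isUnit hσ
  funext q
  by_cases hq : q ∈ s
  · rw [hc_mem q hq, hσ0, mulVec_zero, neg_zero, Pi.zero_apply]
  · simpa [blockSystemMap_apply_of_notMem A c hq] using congrFun hc q

theorem existsUnique_blockSystem [Fintype ι] [DecidableEq n] (s : Finset ι)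
    {A : ι → Matrix n n ℂ} (hA : ∀ j, PosSemidefLtOne (A j)) (e : n → ℂ) :
    ∃! c : ι → n → ℂ, (∀ q ∈ s, c q + ∑ j ∈ s.erase q, A j *ᵥ c j = e) ∧ ∀ q ∉ s, c q = 0 := by
  have hinj := injective_blockSystemMap s hA
  have hbij : Function.Bijective (blockSystemMap s A) :=
    ⟨hinj, LinearMap.injective_iff_surjective.mp hinj⟩
  refine (existsUnique_congr fun c => ?_).mp
    (hbij.existsUnique fun q => if q ∈ s then e else 0)
  rw [funext_iff]
  constructor
  · intro h
    refine ⟨fun q hq => ?_, fun q hq => ?_⟩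
    · simpa [blockSystemMap_apply_of_mem A c hq, hq] using h q
    · simpa [blockSystemMap_apply_of_notMem A c hq, hq] using h q
  · rintro ⟨hs, hns⟩ q
    by_cases hq : q ∈ s
    · rw [blockSystemMap_apply_of_mem A c hq, hs q hq, if_pos hq]
    · rw [blockSystemMap_apply_of_notMem A c hq, hns q hq, if_neg hq]

end BlockSystem

theorem statement11_general
    {Ω : Type*} [mΩ : MeasurableSpace Ω] (μ : Measure Ω) [IsProbabilityMeasure μ]
    {K N Q : ℕ} (M : ℕ)
    (w : Fin K → ℝ) (hw0 : ∀ i, 0 ≤ w i)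
    (P : ℝ) (hP : 0 < P)
    (Ψ : Fin Q → ℕ → Matrix (Fin N) (Fin N) ℂ) (hΨ : ∀ q m, (Ψ q m).PosSemidef)
    (Hhat : Fin Q → ℕ → Ω → Matrix (Fin K) (Fin N) ℂ)
    (hHmeas : ∀ q m i j, Measurable fun ω => Hhat q m ω i j) :
    ∀ Qk : Finset (Fin Q), Qk.Nonempty → ∀ k : Fin K,
      ∃! c : Fin Q → Fin K → ℂ,
        (∀ q ∈ Qk, c q + ∑ j ∈ Qk.erase q,
            PiRec μ (PmFun w P (Ψ j) (Hhat j)) M 0 *ᵥ c j = Pi.single k 1) ∧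
        ∀ q ∉ Qk, c q = 0 := by
  intro Qk _ k
  refine existsUnique_blockSystem Qk (fun q => ?_) (Pi.single k 1)
  exact posSemidefLtOne_piRec (fun m ω => posSemidefLtOne_pof hw0 hP (hΨ q m) _)
    (fun m => entrywiseMeasurable_pof w P (Ψ q m) (hHmeas q m)) M 0

/-- In the multi-stripe setting, with `Π_{q,0}` produced by the backward
recursion from mutually independent square-integrable estimates, for every nonempty subset
`𝒬_k ⊆ {1,…,Q}` and every standard basis vector `e_k`, the linear system
`c_q + ∑_{j ∈ 𝒬_k∖{q}} Π_{j,0} c_j = e_k` (for all `q ∈ 𝒬_k`) has a unique solution. -/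
theorem statement11
    {Ω : Type*} [mΩ : MeasurableSpace Ω] (μ : Measure Ω) [IsProbabilityMeasure μ]
    {K N Q : ℕ} (M : ℕ) (hM : 1 ≤ M)
    (w : Fin K → ℝ) (hw0 : ∀ i, 0 ≤ w i) (hw1 : ∑ i, w i = 1)
    (P : ℝ) (hP : 0 < P)
    (Ψ : Fin Q → ℕ → Matrix (Fin N) (Fin N) ℂ) (hΨ : ∀ q m, (Ψ q m).PosSemidef)
    (Hhat : Fin Q → ℕ → Ω → Matrix (Fin K) (Fin N) ℂ)
    (hHmeas : ∀ q m i j, Measurable fun ω => Hhat q m ω i j)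
    (hHL2 : ∀ q, ∀ m ∈ Finset.Icc 1 M, ∀ i j, MemLp (fun ω => Hhat q m ω i j) 2 μ)
    (hindep : iIndep (fun qm : Fin Q × Fin M => sigGen (Hhat qm.1 (qm.2.1 + 1))) μ) :
    ∀ Qk : Finset (Fin Q), Qk.Nonempty → ∀ k : Fin K,
      ∃! c : Fin Q → Fin K → ℂ,
        (∀ q ∈ Qk, c q + ∑ j ∈ Qk.erase q,
            PiRec μ (PmFun w P (Ψ j) (Hhat j)) M 0 *ᵥ c j = Pi.single k 1) ∧
        ∀ q ∉ Qk, c q = 0 :=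
  statement11_general (mΩ := mΩ) μ M w hw0 P hP Ψ hΨ Hhat hHmeas
end
end

section
/- Let J be a nonempty finite index set, and for each j ∈ J let Π_j ∈ ℂ^{K×K} be Hermitian with 0 ≼ Π_j and I − Π_j positive definite. Then for every b ∈ ℂ^K, the linear system c_l + Σ_{j ∈ J∖{l}} Π_j c_j = b, required for all l ∈ J, has a unique solution (c_l)_{l∈J} ∈ (ℂ^K)^J. -/
/-!
Put `s = ∑ⱼ Πⱼ cⱼ`. The system reads `(I - Πₗ) cₗ = b - s` for every `l`, so it is a square
linear system and it suffices to show that the homogeneous one only has the trivial solution.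
There `Πⱼ s = -Πⱼ (I - Πⱼ) cⱼ`, whence `‖s‖² = ∑ⱼ ⟨s, Πⱼ cⱼ⟩ = -∑ⱼ ⟨cⱼ, (Πⱼ - Πⱼ²) cⱼ⟩ ≤ 0`
because `Πⱼ - Πⱼ² = Πⱼ^{1/2} (I - Πⱼ) Πⱼ^{1/2} ≽ 0`. Hence `s = 0`, and then `(I - Πₗ) cₗ = 0`
forces `cₗ = 0` since `I - Πₗ` is positive definite.
-/

open Matrix Finset
open scoped ComplexOrder

section

variable {ι κ n : Type*} [Fintype n] [DecidableEq n]

theorem Matrix.PosSemidef.sub_mul_self {A : Matrix n n ℂ} (hA : A.PosSemidef)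
    (hA₁ : (1 - A).PosSemidef) : (A - A * A).PosSemidef := by
  obtain ⟨R, hR, hRR⟩ : ∃ R : Matrix n n ℂ, Rᴴ = R ∧ R * R = A := by
    open scoped MatrixOrder in
    exact ⟨CFC.sqrt A, (CFC.sqrt_nonneg A).posSemidef.1, CFC.sqrt_mul_sqrt_self A hA.nonneg⟩
  have hfactor : A - A * A = R * (1 - A) * Rᴴ := by
    rw [hR, ← hRR]
    noncomm_ring
  rw [hfactor]
  exact hA₁.mul_mul_conjTranspose_same R

theorem sum_mulVec_eq_zero_of_one_sub_mulVec_eq {J : Finset ι} {P : ι → Matrix n n ℂ}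
    {c : ι → n → ℂ} (hP : ∀ j ∈ J, (P j).PosSemidef) (hP₁ : ∀ j ∈ J, (1 - P j).PosSemidef)
    (hc : ∀ l ∈ J, (1 - P l) *ᵥ c l = -∑ j ∈ J, P j *ᵥ c j) :
    ∑ j ∈ J, P j *ᵥ c j = 0 := by
  set s := ∑ j ∈ J, P j *ᵥ c j
  have hterm : ∀ j ∈ J, star s ⬝ᵥ (P j *ᵥ c j) = -(star (c j) ⬝ᵥ ((P j - P j * P j) *ᵥ c j)) := by
    intro j hj
    rw [show s = -((1 - P j) *ᵥ c j) by rw [hc j hj, neg_neg], star_neg, neg_dotProduct,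
      star_mulVec, ← dotProduct_mulVec, mulVec_mulVec, (hP₁ j hj).1.eq, sub_mul, one_mul]
  have hs : star s ⬝ᵥ s ≤ 0 := by
    rw [dotProduct_sum, sum_congr rfl hterm, sum_neg_distrib, neg_nonpos]
    exact sum_nonneg fun j hj => ((hP j hj).sub_mul_self (hP₁ j hj)).dotProduct_mulVec_nonneg _
  exact dotProduct_star_self_eq_zero.mp (hs.antisymm (dotProduct_star_self_nonneg s))

theorem eq_zero_of_one_sub_mulVec_add_sum_mulVec_eq_zero {J : Finset ι}
    {P : ι → Matrix n n ℂ} {c : ι → n → ℂ} (hP : ∀ j ∈ J, (P j).PosSemidef)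
    (hP₁ : ∀ j ∈ J, (1 - P j).PosDef)
    (hc : ∀ l ∈ J, (1 - P l) *ᵥ c l + ∑ j ∈ J, P j *ᵥ c j = 0) :
    ∀ l ∈ J, c l = 0 := by
  have hs : ∑ j ∈ J, P j *ᵥ c j = 0 :=
    sum_mulVec_eq_zero_of_one_sub_mulVec_eq hP (fun j hj => (hP₁ j hj).posSemidef)
      fun l hl => eq_neg_of_add_eq_zero_left (hc l hl)
  intro l hl
  apply mulVec_injective_iff_isUnit.mpr (hP₁ l hl).isUnit
  rw [mulVec_zero, ← hc l hl, hs, add_zero]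

theorem add_sum_erase_mulVec [DecidableEq ι] {J : Finset ι} {l : ι} (hl : l ∈ J)
    (P : ι → Matrix n n ℂ) (c : ι → n → ℂ) :
    c l + ∑ j ∈ J.erase l, P j *ᵥ c j = (1 - P l) *ᵥ c l + ∑ j ∈ J, P j *ᵥ c j := by
  rw [← add_sum_erase J _ hl, sub_mulVec, one_mulVec]
  abel

theorem eqOn_of_add_sum_erase_mulVec_eq [DecidableEq ι] {J : Finset ι} {P : ι → Matrix n n ℂ}
    {b : n → ℂ} {c d : ι → n → ℂ} (hP : ∀ j ∈ J, (P j).PosSemidef)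
    (hP₁ : ∀ j ∈ J, (1 - P j).PosDef)
    (hc : ∀ l ∈ J, c l + ∑ j ∈ J.erase l, P j *ᵥ c j = b)
    (hd : ∀ l ∈ J, d l + ∑ j ∈ J.erase l, P j *ᵥ d j = b) :
    ∀ l ∈ J, c l = d l := by
  have hcd := eq_zero_of_one_sub_mulVec_add_sum_mulVec_eq_zero (c := c - d) hP hP₁ fun l hl => by
    have hcl := hc l hl
    have hdl := hd l hl
    rw [add_sum_erase_mulVec hl] at hcl hdl
    simp only [Pi.sub_apply, mulVec_sub, sum_sub_distrib]
    linear_combination (norm := abel) hcl - hdl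
  exact fun l hl => sub_eq_zero.mp (hcd l hl)

def coupledSystem [Fintype κ] (P : κ → Matrix n n ℂ) : (κ → n → ℂ) →ₗ[ℂ] (κ → n → ℂ) where
  toFun c l := (1 - P l) *ᵥ c l + ∑ j, P j *ᵥ c j
  map_add' c d := by
    ext l : 1
    simp only [Pi.add_apply, mulVec_add, sum_add_distrib]
    abel
  map_smul' a c := by
    ext l : 1
    simp only [Pi.smul_apply, mulVec_smul, smul_add, smul_sum, RingHom.id_apply]

theorem coupledSystem_bijective [Fintype κ] {P : κ → Matrix n n ℂ} (hP : ∀ j, (P j).PosSemidef)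
    (hP₁ : ∀ j, (1 - P j).PosDef) : Function.Bijective (coupledSystem P) := by
  have hinj : Function.Injective (coupledSystem P) := by
    rw [← LinearMap.ker_eq_bot, LinearMap.ker_eq_bot']
    intro c hc
    funext l
    exact eq_zero_of_one_sub_mulVec_add_sum_mulVec_eq_zero (J := univ) (fun j _ => hP j)
      (fun j _ => hP₁ j) (fun l _ => congrFun hc l) l (mem_univ l)
  exact ⟨hinj, LinearMap.injective_iff_surjective.mp hinj⟩

end

theorem statement16_general {K : ℕ} {ι : Type*} [DecidableEq ι]
    (J : Finset ι)
    (Pim : ι → Matrix (Fin K) (Fin K) ℂ)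
    (hpsd : ∀ j ∈ J, (Pim j).PosSemidef)
    (hlt : ∀ j ∈ J, ((1 : Matrix (Fin K) (Fin K) ℂ) - Pim j).PosDef)
    (b : Fin K → ℂ) :
    ∃! c : ι → Fin K → ℂ,
      (∀ l ∈ J, c l + ∑ j ∈ J.erase l, Pim j *ᵥ c j = b) ∧ ∀ l ∉ J, c l = 0 := by
  obtain ⟨d, hd⟩ := (coupledSystem_bijective (P := fun j : J => Pim j) (fun j => hpsd j j.2)
    (fun j => hlt j j.2)).2 fun _ => b
  set c : ι → Fin K → ℂ := fun i => if h : i ∈ J then d ⟨i, h⟩ else 0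
  have hc_mem : ∀ l (hl : l ∈ J), c l = d ⟨l, hl⟩ := fun l hl => dif_pos hl
  have hc_out : ∀ l ∉ J, c l = 0 := fun l hl => dif_neg hl
  have hsum : ∑ j ∈ J, Pim j *ᵥ c j = ∑ j : J, Pim j *ᵥ d j := by
    rw [← sum_coe_sort J]
    exact sum_congr rfl fun j _ => by rw [hc_mem j j.2]
  have hc : ∀ l ∈ J, c l + ∑ j ∈ J.erase l, Pim j *ᵥ c j = b := fun l hl => by
    rw [add_sum_erase_mulVec hl, hsum, hc_mem l hl]
    exact congrFun hd ⟨l, hl⟩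
  refine ⟨c, ⟨hc, hc_out⟩, fun c' ⟨hc', hc'_out⟩ => funext fun l => ?_⟩
  by_cases hl : l ∈ J
  · exact eqOn_of_add_sum_erase_mulVec_eq hpsd hlt hc' hc l hl
  · rw [hc'_out l hl, hc_out l hl]

/-- If, for each `j` in a nonempty finite index set `J`, `Π_j ∈ ℂ^{K×K}` is
Hermitian with `0 ≼ Π_j` and `I − Π_j` positive definite, then for every `b ∈ ℂ^K` the linear
system `c_l + ∑_{j ∈ J∖{l}} Π_j c_j = b` (for all `l ∈ J`) has a unique solution. -/
theorem statement16 {K : ℕ} {ι : Type*} [DecidableEq ι]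
    (J : Finset ι) (hJ : J.Nonempty)
    (Pim : ι → Matrix (Fin K) (Fin K) ℂ)
    (hpsd : ∀ j ∈ J, (Pim j).PosSemidef)
    (hlt : ∀ j ∈ J, ((1 : Matrix (Fin K) (Fin K) ℂ) - Pim j).PosDef)
    (b : Fin K → ℂ) :
    ∃! c : ι → Fin K → ℂ,
      (∀ l ∈ J, c l + ∑ j ∈ J.erase l, Pim j *ᵥ c j = b) ∧ ∀ l ∉ J, c l = 0 :=
  statement16_general J Pim hpsd hlt b
end
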